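/- arXiv:1412.6022 — 2 statements merged into one kernel-verified Lean document; each statement's English description precedes it below -/
import Mathlib

section
/- If f : ℝ → ℝ is continuous, f(u) = o(u) as |u| → 0, f(u)/|u| is non-decreasing on (-∞,0) and on (0,∞), and F(u) = ∫₀ᵘ f(t) dt, then f(u)·u ≥ 2·F(u) ≥ 0 for all u ∈ ℝ. -/
/-!
Monotonicity of `f t / t` on `(0, u]` keeps `f` below the chord `t ↦ (f u / u) t`, whose integral
over `[0, u]` is `f u * u / 2`; and since `f t / t → 0` as `t → 0⁺`, monotonicity also forces
`f t / t ≥ 0`, so `f ≥ 0` on `(0, ∞)` and `F u ≥ 0`. Negative `u` reduce to positive ones through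
the reflection `t ↦ -f (-t)`, which turns the hypotheses on `(-∞, 0)` into those on `(0, ∞)`.
-/

open MeasureTheory Set Filter Topology

section PositiveHalfLine

variable {f : ℝ → ℝ} {u : ℝ}

lemma nonneg_of_monotoneOn_div_of_tendsto (hmono : MonotoneOn (fun t => f t / t) (Ioi 0))
    (hlim : Tendsto (fun t => f t / t) (𝓝[>] 0) (𝓝 0)) (hu : 0 < u) : 0 ≤ f u := by
  have hbelow : ∀ᶠ t in 𝓝[>] 0, f t / t ≤ f u / u :=
    eventually_of_mem (Ioo_mem_nhdsGT hu) fun t ht => hmono ht.1 hu ht.2.le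
  simpa using (le_div_iff₀ hu).mp (le_of_tendsto hlim hbelow)

lemma integral_nonneg_of_monotoneOn_div_of_tendsto (hf : IntervalIntegrable f volume 0 u)
    (hmono : MonotoneOn (fun t => f t / t) (Ioi 0))
    (hlim : Tendsto (fun t => f t / t) (𝓝[>] 0) (𝓝 0)) (hu : 0 ≤ u) :
    0 ≤ ∫ t in (0 : ℝ)..u, f t := by
  simpa using intervalIntegral.integral_mono_on_of_le_Ioo hu intervalIntegrable_const hf
    fun t ht => nonneg_of_monotoneOn_div_of_tendsto hmono hlim ht.1

lemma integral_le_mul_self_div_two_of_monotoneOn_div (hf : IntervalIntegrable f volume 0 u)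
    (hmono : MonotoneOn (fun t => f t / t) (Ioi 0)) (hu : 0 ≤ u) :
    ∫ t in (0 : ℝ)..u, f t ≤ f u * u / 2 := by
  rcases hu.eq_or_lt with rfl | hu
  · simp
  calc ∫ t in (0 : ℝ)..u, f t ≤ ∫ t in (0 : ℝ)..u, f u / u * t := by
        refine intervalIntegral.integral_mono_on_of_le_Ioo hu.le hf
          (intervalIntegral.intervalIntegrable_id.const_mul _) fun t ht => ?_
        exact (div_le_iff₀ ht.1).mp (hmono ht.1 hu ht.2.le)
    _ = f u * u / 2 := by
        rw [intervalIntegral.integral_const_mul, integral_id]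
        field_simp
        ring

theorem two_mul_integral_le_and_integral_nonneg (hf : IntervalIntegrable f volume 0 u)
    (hmono : MonotoneOn (fun t => f t / t) (Ioi 0))
    (hlim : Tendsto (fun t => f t / t) (𝓝[>] 0) (𝓝 0)) (hu : 0 ≤ u) :
    2 * ∫ t in (0 : ℝ)..u, f t ≤ f u * u ∧ 0 ≤ ∫ t in (0 : ℝ)..u, f t :=
  ⟨by linarith [integral_le_mul_self_div_two_of_monotoneOn_div hf hmono hu],
    integral_nonneg_of_monotoneOn_div_of_tendsto hf hmono hlim hu⟩

end PositiveHalfLine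

lemma integral_neg_comp_neg (f : ℝ → ℝ) (u : ℝ) :
    ∫ t in (0 : ℝ)..u, -f (-t) = ∫ t in (0 : ℝ)..-u, f t := by
  rw [intervalIntegral.integral_neg, intervalIntegral.integral_comp_neg,
    intervalIntegral.integral_symm, neg_zero, neg_neg]

theorem stmt0 (f : ℝ → ℝ) (hf : Continuous f)
    (hsmall : ∀ ε > (0:ℝ), ∃ δ > (0:ℝ), ∀ u : ℝ, |u| < δ → |f u| ≤ ε * |u|)
    (hmono_neg : ∀ u v : ℝ, u ≤ v → v < 0 → f u / |u| ≤ f v / |v|)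
    (hmono_pos : ∀ u v : ℝ, 0 < u → u ≤ v → f u / |u| ≤ f v / |v|)
    (F : ℝ → ℝ) (hF : ∀ u : ℝ, F u = ∫ t in (0:ℝ)..u, f t) :
    ∀ u : ℝ, 2 * F u ≤ f u * u ∧ 0 ≤ F u := by
  have hlittle : f =o[𝓝 0] id := Asymptotics.isLittleO_iff.2 fun ε hε => by
    obtain ⟨δ, hδ, hbound⟩ := hsmall ε hε
    exact Metric.eventually_nhds_iff.2
      ⟨δ, hδ, fun u hu => by simpa using hbound u (by simpa using hu)⟩
  have hlim : Tendsto (fun t => f t / t) (𝓝 0) (𝓝 0) := hlittle.tendsto_div_nhds_zero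
  have hlim_refl : Tendsto (fun t => -f (-t) / t) (𝓝 0) (𝓝 0) := by
    simpa [Function.comp_def, div_neg, neg_div] using
      hlim.comp (continuous_neg.tendsto' 0 0 neg_zero)
  have hmono : MonotoneOn (fun t => f t / t) (Ioi 0) := by
    intro a (ha : 0 < a) b (hb : 0 < b) hab
    simpa [abs_of_pos ha, abs_of_pos hb] using hmono_pos a b ha hab
  have hmono_refl : MonotoneOn (fun t => -f (-t) / t) (Ioi 0) := by
    intro a (ha : 0 < a) b (hb : 0 < b) hab
    simp only [neg_div, neg_le_neg_iff]
    simpa [abs_of_pos ha, abs_of_pos hb] using hmono_neg (-b) (-a) (by linarith) (by linarith)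
  intro u
  rw [hF]
  rcases le_total 0 u with hu | hu
  · exact two_mul_integral_le_and_integral_nonneg (hf.intervalIntegrable 0 u) hmono
      (hlim.mono_left nhdsWithin_le_nhds) hu
  · have hf_refl : Continuous fun t => -f (-t) := by fun_prop
    have := two_mul_integral_le_and_integral_nonneg (hf_refl.intervalIntegrable 0 (-u))
      hmono_refl (hlim_refl.mono_left nhdsWithin_le_nhds) (neg_nonneg.2 hu)
    simpa only [integral_neg_comp_neg, neg_neg, neg_mul_neg] using this
end

section
/- Let f : ℝ → ℝ be continuous with f(u)u ≥ 2F(u) ≥ 0 for all u (F the primitive of f), f(u) = o(u) at 0, u ↦ f(u)/|u| non-decreasing on (-∞,0) and (0,∞), and F(u)/u² → ∞ as |u| → ∞. Fix u ≠ 0 and v ∈ ℝ, and define φ(t) := f(u)((t²−1)/2 · u + t v) + F(u) − F(tu + v) for t ≥ 0. Then φ(t) ≤ 0 for all t ≥ 0. -/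
/-! Write `w = t u + v` and `c = f u / u ≥ 0`. Monotonicity of `f s / |s|` on each half-line gives
`(f s - c s) (s - u) ≥ 0` for `s` of the sign of `u`; integrating from `u` to `w` yields
`F w - F u ≥ c (w² - u²) / 2` when `u w > 0`, and then
`φ(t) = c (w² - u²) / 2 - c v² / 2 + F u - F w ≤ 0`.
When `u w ≤ 0`, `f u · w ≤ 0`, so `φ(t) ≤ F u - f u · u / 2 - F w ≤ 0`. -/

open MeasureTheory Set

theorem integral_nonneg_of_mul_sub_nonneg {h : ℝ → ℝ} {a b : ℝ}
    (hh : ∀ x ∈ uIcc a b, 0 ≤ h x * (x - a)) : 0 ≤ ∫ x in a..b, h x := by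
  rcases le_total a b with hab | hba
  · rw [intervalIntegral.integral_of_le hab, integral_Ioc_eq_integral_Ioo]
    refine setIntegral_nonneg measurableSet_Ioo fun x hx => ?_
    exact nonneg_of_mul_nonneg_left (hh x (Icc_subset_uIcc (Ioo_subset_Icc_self hx)))
      (sub_pos.2 hx.1)
  · rw [intervalIntegral.integral_of_ge hba, integral_Ioc_eq_integral_Ioo, neg_nonneg]
    refine setIntegral_nonpos measurableSet_Ioo fun x hx => ?_
    exact nonpos_of_mul_nonneg_left (hh x (Icc_subset_uIcc' (Ioo_subset_Icc_self hx)))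
      (sub_neg.2 hx.2)

theorem mul_pos_of_mem_uIcc {u w x : ℝ} (huw : 0 < u * w) (hx : x ∈ uIcc u w) : 0 < u * x := by
  rw [uIcc] at hx
  rcases pos_and_pos_or_neg_and_neg_of_mul_pos huw with ⟨hu, hw⟩ | ⟨hu, hw⟩
  · exact mul_pos hu ((lt_inf_iff.2 ⟨hu, hw⟩).trans_le hx.1)
  · exact mul_pos_of_neg_of_neg hu (hx.2.trans_lt (sup_lt_iff.2 ⟨hu, hw⟩))

section RadialRatio

variable {f : ℝ → ℝ} (hneg : MonotoneOn (fun s => f s / |s|) (Iio 0))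
  (hpos : MonotoneOn (fun s => f s / |s|) (Ioi 0))
include hneg hpos

theorem sub_div_mul_mul_sub_nonneg {u x : ℝ} (hux : 0 < u * x) :
    0 ≤ (f x - f u / u * x) * (x - u) := by
  rcases pos_and_pos_or_neg_and_neg_of_mul_pos hux with ⟨hu, hx⟩ | ⟨hu, hx⟩
  · have hrat : f x - f u / u * x = |x| * (f x / |x| - f u / |u|) := by
      rw [abs_of_pos hu, abs_of_pos hx]; field_simp
    rw [hrat, mul_assoc]
    exact mul_nonneg (abs_nonneg x) ((hpos.monovaryOn monotoneOn_id).sub_mul_sub_nonneg hu hx)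
  · have hrat : f x - f u / u * x = |x| * (f x / |x| - f u / |u|) := by
      rw [abs_of_neg hu, abs_of_neg hx]; field_simp [hu.ne, hx.ne]; ring
    rw [hrat, mul_assoc]
    exact mul_nonneg (abs_nonneg x) ((hneg.monovaryOn monotoneOn_id).sub_mul_sub_nonneg hu hx)

theorem div_mul_sq_sub_sq_le_integral {u w : ℝ} (hf : Continuous f) (huw : 0 < u * w) :
    f u / u * ((w ^ 2 - u ^ 2) / 2) ≤ ∫ x in u..w, f x := by
  have hgap : 0 ≤ ∫ x in u..w, (f x - f u / u * x) :=
    integral_nonneg_of_mul_sub_nonneg fun x hx =>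
      sub_div_mul_mul_sub_nonneg hneg hpos (mul_pos_of_mem_uIcc huw hx)
  rw [intervalIntegral.integral_sub (hf.intervalIntegrable _ _)
    (intervalIntegral.intervalIntegrable_id.const_mul (f u / u)),
    intervalIntegral.integral_const_mul, integral_id] at hgap
  linarith

end RadialRatio

theorem stmt8_general (f : ℝ → ℝ) (hf : Continuous f)
    (F : ℝ → ℝ) (hF : ∀ s : ℝ, F s = ∫ t in (0:ℝ)..s, f t)
    (hAR : ∀ s : ℝ, 2 * F s ≤ f s * s ∧ 0 ≤ F s)
    (hmono_neg : ∀ s r : ℝ, s ≤ r → r < 0 → f s / |s| ≤ f r / |r|)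
    (hmono_pos : ∀ s r : ℝ, 0 < s → s ≤ r → f s / |s| ≤ f r / |r|)
    (u v : ℝ) (hu : u ≠ 0) :
    ∀ t : ℝ, 0 ≤ t →
      f u * ((t ^ 2 - 1) / 2 * u + t * v) + F u - F (t * u + v) ≤ 0 := by
  intro t ht
  set w := t * u + v
  have hfu : 0 ≤ f u * u := by linarith [(hAR u).1, (hAR u).2]
  rcases lt_or_ge 0 (u * w) with huw | huw
  · have hgap : f u / u * ((w ^ 2 - u ^ 2) / 2) ≤ F w - F u := by
      rw [hF, hF, intervalIntegral.integral_interval_sub_left (hf.intervalIntegrable _ _)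
        (hf.intervalIntegrable _ _)]
      exact div_mul_sq_sub_sq_le_integral (fun s _ r hr hsr => hmono_neg s r hsr hr)
        (fun s hs r _ hsr => hmono_pos s r hs hsr) hf huw
    have hc : 0 ≤ f u / u := by
      rw [← mul_div_mul_right (f u) u hu]
      exact div_nonneg hfu (mul_self_nonneg u)
    have hsplit : f u * ((t ^ 2 - 1) / 2 * u + t * v) =
        f u / u * ((w ^ 2 - u ^ 2) / 2) - f u / u * v ^ 2 / 2 := by
      simp only [w]; field_simp; ring
    linarith [mul_nonneg hc (sq_nonneg v)]
  · have hfw : f u * w ≤ 0 :=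
      nonpos_of_mul_nonpos_left (b := u ^ 2)
        (by linarith [mul_nonpos_of_nonneg_of_nonpos hfu huw]) (by positivity)
    have hsplit : f u * ((t ^ 2 - 1) / 2 * u + t * v) =
        t * (f u * w) - f u * u * (t ^ 2 + 1) / 2 := by
      simp only [w]; ring
    linarith [(hAR u).1, (hAR w).2, mul_nonneg hfu (sq_nonneg t),
      mul_nonpos_of_nonneg_of_nonpos ht hfw]

theorem stmt8 (f : ℝ → ℝ) (hf : Continuous f)
    (F : ℝ → ℝ) (hF : ∀ s : ℝ, F s = ∫ t in (0:ℝ)..s, f t)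
    (hAR : ∀ s : ℝ, 2 * F s ≤ f s * s ∧ 0 ≤ F s)
    (hsmall : ∀ ε > (0:ℝ), ∃ δ > (0:ℝ), ∀ s : ℝ, |s| < δ → |f s| ≤ ε * |s|)
    (hmono_neg : ∀ s r : ℝ, s ≤ r → r < 0 → f s / |s| ≤ f r / |r|)
    (hmono_pos : ∀ s r : ℝ, 0 < s → s ≤ r → f s / |s| ≤ f r / |r|)
    (hsuper : ∀ M : ℝ, ∃ R : ℝ, ∀ s : ℝ, R ≤ |s| → M ≤ F s / s ^ 2)
    (u v : ℝ) (hu : u ≠ 0) :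
    ∀ t : ℝ, 0 ≤ t →
      f u * ((t ^ 2 - 1) / 2 * u + t * v) + F u - F (t * u + v) ≤ 0 :=
  stmt8_general f hf F hF hAR hmono_neg hmono_pos u v hu
end
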